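/- Pointwise convergence of AdaPBB: the sequence {x^k} generated by the AdaPBB iteration converges to a minimizer of F = f + g. -/

import Mathlib

open scoped RealInnerProductSpace
open Finset Filter

noncomputable section

/-- The AdaPBB iteration (Algorithm 3 of the paper) in its implicit form, for a composite
objective `F = f + g` where `f : ℝⁿ → ℝ` is convex and differentiable with gradient `f'`,
and `g : ℝⁿ → ℝ` is convex.  `ξ k` is a subgradient of `g` at `x k`. -/
structure AdaPBB (n : ℕ) where
  f : EuclideanSpace ℝ (Fin n) → ℝ
  g : EuclideanSpace ℝ (Fin n) → ℝ
  f' : EuclideanSpace ℝ (Fin n) → EuclideanSpace ℝ (Fin n)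
  x : ℕ → EuclideanSpace ℝ (Fin n)
  ξ : ℕ → EuclideanSpace ℝ (Fin n)
  α : ℕ → ℝ
  θ : ℕ → ℝ
  lam : ℕ → ℝ
  hfconv : ConvexOn ℝ Set.univ f
  hgconv : ConvexOn ℝ Set.univ g
  hgrad : ∀ y, HasGradientAt f (f' y) y
  hmin : ∃ z, ∀ y, f z + g z ≤ f y + g y
  hα0 : 0 < α 0
  hθ0 : 0 ≤ θ 0
  hsub : ∀ k, ∀ y, g (x k) + ⟪ξ k, y - x k⟫ ≤ g y
  hstep : ∀ k, x (k + 1) = x k - α k • (f' (x k) + ξ (k + 1))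
  hne : ∀ k, f' (x (k + 1)) ≠ f' (x k)
  hlam : ∀ k, lam (k + 1) =
    ⟪f' (x (k + 1)) - f' (x k), x (k + 1) - x k⟫ / ‖f' (x (k + 1)) - f' (x k)‖ ^ 2
  hlampos : ∀ k, 0 < lam (k + 1)
  hcase1 : ∀ k, α k ≤ lam (k + 1) →
    α (k + 1) = Real.sqrt (1 + θ k) * α k ∧ θ (k + 1) = α (k + 1) / α k
  hcase2 : ∀ k, α k / 2 < lam (k + 1) → lam (k + 1) < α k →
    α (k + 1) = α k / Real.sqrt 2 ∧ θ (k + 1) = 0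
  hcase3 : ∀ k, lam (k + 1) ≤ α k / 2 →
    α (k + 1) = lam (k + 1) / Real.sqrt 2 ∧ θ (k + 1) = 0

namespace AdaPBB

variable {n : ℕ}

/-- The composite objective `F = f + g`. -/
def F (S : AdaPBB n) (y : EuclideanSpace ℝ (Fin n)) : ℝ := S.f y + S.g y

/-- `B_k` (for `k ≥ 1`), as in (5.13). -/
def B (S : AdaPBB n) (k : ℕ) : ℝ :=
  if S.α (k - 1) ≤ S.lam k then 0
  else if S.α (k - 1) / 2 < S.lam k then 1
  else (S.α (k - 1) - S.lam k) ^ 2 / S.lam k ^ 2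

/-- `E_k` for `k ≥ 1`, as in (5.13). -/
def Eaux (S : AdaPBB n) (k : ℕ) : ℝ :=
  if S.α (k - 1) ≤ S.lam k then 1 / S.α (k - 1) else 0

/-- `E_k`, with the convention `E_0 = (E_1·α_1² - α_0)/α_0²`. -/
def E (S : AdaPBB n) (k : ℕ) : ℝ :=
  if k = 0 then (S.Eaux 1 * S.α 1 ^ 2 - S.α 0) / S.α 0 ^ 2 else S.Eaux k

/-- The energy `V_k` (for `k ≥ 1`), relative to a minimizer `xs` of `F`. -/
def V (S : AdaPBB n) (xs : EuclideanSpace ℝ (Fin n)) (k : ℕ) : ℝ :=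
  ‖S.x k - xs‖ ^ 2 + 2 * S.B k * S.α k ^ 2 * ‖S.f' (S.x (k - 1)) + S.ξ (k - 1)‖ ^ 2 +
    2 * S.α (k - 1) * (1 + S.E (k - 1) * S.α (k - 1)) * (S.F (S.x (k - 1)) - S.F xs)

/-- The energy `U_k` (for `k ≥ 1`), relative to a minimizer `xs` of `F`. -/
def U (S : AdaPBB n) (xs : EuclideanSpace ℝ (Fin n)) (k : ℕ) : ℝ :=
  ‖S.x k - xs‖ ^ 2 + 2 * S.B k * S.α k ^ 2 * ‖S.f' (S.x (k - 1)) + S.ξ (k - 1)‖ ^ 2 +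
    2 * S.E k * S.α k ^ 2 * (S.F (S.x (k - 1)) - S.F xs)

end AdaPBB

end

/-!
For every minimizer `z` of `F`, the energy `U z k` is nonincreasing along the iteration: from
step `k + 1` to `k + 2` it drops by at least `α² ‖∇f + ξ‖²` (if the step size grows) or by
`2 α (F - F z)` (if it shrinks), the Barzilai–Borwein quotient controlling the new gradient in
each case. Hence the iterates stay in the ball of radius `T` around `x*`, where cocoercivity
gives `λ ≥ 1 / L`, so the step sizes stay bounded away from `0` and `F (x k) → F*`. Every
cluster point is then a minimizer, and since `U z - U w = ‖x - z‖² - ‖x - w‖²` for minimizers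
`z`, `w`, Opial's argument shows that there is only one cluster point.
-/

theorem ConvexOn.add_inner_le_of_hasGradientAt {E : Type*} [NormedAddCommGroup E]
    [InnerProductSpace ℝ E] [CompleteSpace E] {f : E → ℝ} {G x : E}
    (hf : ConvexOn ℝ Set.univ f) (hx : HasGradientAt f G x) (y : E) :
    f x + ⟪G, y - x⟫ ≤ f y := by
  have hx' : HasFDerivAt f (InnerProductSpace.toDual ℝ E G) (AffineMap.lineMap x y (0 : ℝ)) := by
    simpa using hx.hasFDerivAt
  have hline : HasDerivAt (f ∘ AffineMap.lineMap (k := ℝ) x y) ⟪G, y - x⟫ 0 := by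
    simpa using hx'.comp_hasDerivAt (0 : ℝ) AffineMap.hasDerivAt_lineMap
  have := (hf.comp_affineMap (AffineMap.lineMap x y)).le_slope_of_hasDerivAt
    (Set.mem_univ 0) (Set.mem_univ 1) zero_lt_one hline
  simp only [slope_def_field, Function.comp_apply, AffineMap.lineMap_apply_zero,
    AffineMap.lineMap_apply_one, sub_zero, div_one] at this
  linarith

theorem MapClusterPt.eq_of_tendsto_comp {ι X Y : Type*} [TopologicalSpace X] [TopologicalSpace Y]
    [T2Space Y] {l : Filter ι} {u : ι → X} {z : X} {h : X → Y} {c : Y}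
    (hz : MapClusterPt z l u) (hh : ContinuousAt h z) (hc : Tendsto (h ∘ u) l (nhds c)) :
    h z = c :=
  eq_of_nhds_neBot (ClusterPt.mono (hz.continuousAt_comp hh) hc)

/-- Opial's lemma, in the form where only differences of squared distances need to converge. -/
theorem exists_tendsto_of_tendsto_dist_sq_sub {E : Type*} [MetricSpace E] {K C : Set E}
    {x : ℕ → E} (hK : IsCompact K) (hxK : ∀ k, x k ∈ K)
    (hC : ∀ z, MapClusterPt z atTop x → z ∈ C)
    (hx : ∀ z ∈ C, ∀ w ∈ C,
      ∃ c, Tendsto (fun k ↦ dist (x k) z ^ 2 - dist (x k) w ^ 2) atTop (nhds c)) :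
    ∃ z ∈ C, Tendsto x atTop (nhds z) := by
  obtain ⟨z, -, hz⟩ := hK.exists_mapClusterPt_of_frequently (l := atTop) (Frequently.of_forall hxK)
  refine ⟨z, hC z hz, hK.tendsto_nhds_of_unique_mapClusterPt (Eventually.of_forall hxK) ?_⟩
  intro w _ hw
  obtain ⟨c, hc⟩ := hx w (hC w hw) z (hC z hz)
  have hcont : Continuous fun y ↦ dist y w ^ 2 - dist y z ^ 2 := by fun_prop
  have hwc := hw.eq_of_tendsto_comp hcont.continuousAt hc
  have hzc := hz.eq_of_tendsto_comp hcont.continuousAt hc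
  rw [dist_self] at hwc hzc
  rw [← dist_eq_zero]
  nlinarith [dist_comm w z]

section BarzilaiBorwein

variable {E : Type*} [NormedAddCommGroup E] [InnerProductSpace ℝ E] {a l : ℝ} {d δ : E}

/-! Here `-a • d` is a step and `δ` the resulting change of gradient, so that `l` is the
Barzilai–Borwein step size `⟪δ, -a • d⟫ / ‖δ‖²`. -/

theorem bb_mul_norm_add_sq (hl : l * ‖δ‖ ^ 2 = -(a * ⟪δ, d⟫)) :
    a * ‖d + δ‖ ^ 2 = a * ‖d‖ ^ 2 + (a - 2 * l) * ‖δ‖ ^ 2 := by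
  rw [norm_add_sq_real, real_inner_comm]
  linear_combination 2 * hl

theorem bb_mul_norm_add_sq_le_inner (hl : l * ‖δ‖ ^ 2 = -(a * ⟪δ, d⟫)) (hal : a ≤ l) :
    a * ‖d + δ‖ ^ 2 ≤ a * ⟪d + δ, d⟫ := by
  have hinner : a * ⟪d + δ, d⟫ = a * ‖d‖ ^ 2 - l * ‖δ‖ ^ 2 := by
    rw [inner_add_left, real_inner_self_eq_norm_sq]
    linear_combination hl
  rw [bb_mul_norm_add_sq hl, hinner]
  nlinarith [sq_nonneg ‖δ‖]

theorem bb_sq_mul_norm_sq_le (hl : l * ‖δ‖ ^ 2 = -(a * ⟪δ, d⟫)) :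
    l ^ 2 * ‖δ‖ ^ 2 ≤ a ^ 2 * ‖d‖ ^ 2 := by
  rcases (norm_nonneg δ).eq_or_lt with hδ | hδ
  · rw [← hδ, zero_pow two_ne_zero, mul_zero]
    positivity
  have hcs : ⟪δ, d⟫ ^ 2 ≤ ‖δ‖ ^ 2 * ‖d‖ ^ 2 := by
    rw [← sq_abs, ← mul_pow]
    exact pow_le_pow_left₀ (abs_nonneg _) (abs_real_inner_le_norm δ d) 2
  have : ‖δ‖ ^ 2 * (l ^ 2 * ‖δ‖ ^ 2) ≤ ‖δ‖ ^ 2 * (a ^ 2 * ‖d‖ ^ 2) := by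
    have h := congrArg (· ^ 2) hl
    simp only [neg_sq, mul_pow] at h
    nlinarith [mul_le_mul_of_nonneg_left hcs (sq_nonneg a)]
  exact le_of_mul_le_mul_left this (by positivity)

theorem bb_norm_add_sq_le_of_half_lt (hl : l * ‖δ‖ ^ 2 = -(a * ⟪δ, d⟫)) (ha : 0 < a)
    (hal : a / 2 < l) : ‖d + δ‖ ^ 2 ≤ ‖d‖ ^ 2 := by
  have := bb_mul_norm_add_sq hl
  have : a * ‖d + δ‖ ^ 2 ≤ a * ‖d‖ ^ 2 := by nlinarith [sq_nonneg ‖δ‖]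
  exact le_of_mul_le_mul_left this ha

theorem bb_norm_add_sq_le_of_le_half (hl : l * ‖δ‖ ^ 2 = -(a * ⟪δ, d⟫)) (ha : 0 < a)
    (hl0 : 0 < l) (hal : l ≤ a / 2) : ‖d + δ‖ ^ 2 ≤ (a - l) ^ 2 / l ^ 2 * ‖d‖ ^ 2 := by
  have hid := bb_mul_norm_add_sq hl
  have hcs := bb_sq_mul_norm_sq_le hl
  rw [div_mul_eq_mul_div, le_div_iff₀ (by positivity)]
  have : a * (‖d + δ‖ ^ 2 * l ^ 2) ≤ a * ((a - l) ^ 2 * ‖d‖ ^ 2) := by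
    nlinarith [mul_le_mul_of_nonneg_left hcs (by linarith : 0 ≤ a - 2 * l)]
  exact le_of_mul_le_mul_left this ha

end BarzilaiBorwein

namespace AdaPBB

variable {n : ℕ} (S : AdaPBB n)

def subgradF (k : ℕ) : EuclideanSpace ℝ (Fin n) := S.f' (S.x k) + S.ξ k

def dir (k : ℕ) : EuclideanSpace ℝ (Fin n) := S.f' (S.x k) + S.ξ (k + 1)

theorem x_sub_x_succ (k : ℕ) : S.x k - S.x (k + 1) = S.α k • S.dir k := by
  rw [S.hstep k, dir, sub_sub_cancel]

theorem alpha_pos_and_theta_nonneg (k : ℕ) : 0 < S.α k ∧ 0 ≤ S.θ k := by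
  induction k with
  | zero => exact ⟨S.hα0, S.hθ0⟩
  | succ k ih =>
    obtain ⟨hα, hθ⟩ := ih
    rcases le_or_gt (S.α k) (S.lam (k + 1)) with h1 | h1
    · obtain ⟨hα', hθ'⟩ := S.hcase1 k h1
      have hpos : 0 < S.α (k + 1) := by rw [hα']; positivity
      exact ⟨hpos, by rw [hθ']; positivity⟩
    · have hl := S.hlampos k
      rcases lt_or_ge (S.α k / 2) (S.lam (k + 1)) with h2 | h2
      · obtain ⟨hα', hθ'⟩ := S.hcase2 k h2 h1
        exact ⟨by rw [hα']; positivity, hθ'.ge⟩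
      · obtain ⟨hα', hθ'⟩ := S.hcase3 k h2
        exact ⟨by rw [hα']; positivity, hθ'.ge⟩

theorem alpha_pos (k : ℕ) : 0 < S.α k := (S.alpha_pos_and_theta_nonneg k).1

theorem theta_nonneg (k : ℕ) : 0 ≤ S.θ k := (S.alpha_pos_and_theta_nonneg k).2

section StepSizeCases

variable {k : ℕ}

theorem alpha_succ_sq_of_le (h : S.α k ≤ S.lam (k + 1)) :
    S.α (k + 1) ^ 2 = (1 + S.θ k) * S.α k ^ 2 := by
  rw [(S.hcase1 k h).1, mul_pow, Real.sq_sqrt (by linarith [S.theta_nonneg k])]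

theorem alpha_succ_sq_of_half_lt (h₁ : S.α k / 2 < S.lam (k + 1)) (h₂ : S.lam (k + 1) < S.α k) :
    S.α (k + 1) ^ 2 = S.α k ^ 2 / 2 := by
  rw [(S.hcase2 k h₁ h₂).1, div_pow, Real.sq_sqrt zero_le_two]

theorem alpha_succ_sq_of_le_half (h : S.lam (k + 1) ≤ S.α k / 2) :
    S.α (k + 1) ^ 2 = S.lam (k + 1) ^ 2 / 2 := by
  rw [(S.hcase3 k h).1, div_pow, Real.sq_sqrt zero_le_two]

theorem theta_succ_of_lt (h : S.lam (k + 1) < S.α k) : S.θ (k + 1) = 0 := by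
  rcases lt_or_ge (S.α k / 2) (S.lam (k + 1)) with h₁ | h₁
  · exact (S.hcase2 k h₁ h).2
  · exact (S.hcase3 k h₁).2

theorem B_succ_of_le (h : S.α k ≤ S.lam (k + 1)) : S.B (k + 1) = 0 := by
  simp [B, h]

theorem B_succ_of_half_lt (h₁ : S.α k / 2 < S.lam (k + 1)) (h₂ : S.lam (k + 1) < S.α k) :
    S.B (k + 1) = 1 := by
  simp [B, h₁, h₂.not_ge]

theorem B_succ_of_le_half (h : S.lam (k + 1) ≤ S.α k / 2) :
    S.B (k + 1) = (S.α k - S.lam (k + 1)) ^ 2 / S.lam (k + 1) ^ 2 := by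
  have h' : ¬ S.α k ≤ S.lam (k + 1) := by linarith [S.alpha_pos k]
  simp [B, h', h.not_gt]

theorem E_succ_of_le (h : S.α k ≤ S.lam (k + 1)) : S.E (k + 1) = 1 / S.α k := by
  simp [E, Eaux, h]

theorem E_succ_of_lt (h : S.lam (k + 1) < S.α k) : S.E (k + 1) = 0 := by
  simp [E, Eaux, h.not_ge]

end StepSizeCases

theorem min_le_alpha {c : ℝ} (hc : ∀ k, c ≤ S.lam (k + 1)) (k : ℕ) :
    min (S.α 0) (c / √2) ≤ S.α k := by
  induction k with
  | zero => exact min_le_left _ _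
  | succ k ih =>
    have hc' : min (S.α 0) (c / √2) ≤ S.lam (k + 1) / √2 :=
      (min_le_right _ _).trans (div_le_div_of_nonneg_right (hc k) (Real.sqrt_nonneg 2))
    rcases le_or_gt (S.α k) (S.lam (k + 1)) with h | h
    · have hθ : 1 ≤ √(1 + S.θ k) := Real.one_le_sqrt.2 (by linarith [S.theta_nonneg k])
      rw [(S.hcase1 k h).1]
      nlinarith [S.alpha_pos k]
    rcases lt_or_ge (S.α k / 2) (S.lam (k + 1)) with h₁ | h₁
    · rw [(S.hcase2 k h₁ h).1]
      exact hc'.trans (div_le_div_of_nonneg_right h.le (Real.sqrt_nonneg 2))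
    · rwa [(S.hcase3 k h₁).1]

theorem inv_le_lam {xs : EuclideanSpace ℝ (Fin n)} {T L : ℝ}
    (hcoco : ∀ x y : EuclideanSpace ℝ (Fin n), ‖x - xs‖ ≤ T → ‖y - xs‖ ≤ T →
      (1 / L) * ‖S.f' x - S.f' y‖ ^ 2 ≤ ⟪S.f' x - S.f' y, x - y⟫)
    (hball : ∀ k, ‖S.x k - xs‖ ≤ T) (k : ℕ) :
    1 / L ≤ S.lam (k + 1) := by
  have hδ : 0 < ‖S.f' (S.x (k + 1)) - S.f' (S.x k)‖ ^ 2 :=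
    pow_pos (norm_pos_iff.2 (sub_ne_zero.2 (S.hne k))) 2
  rw [S.hlam k, le_div_iff₀ hδ]
  exact hcoco _ _ (hball (k + 1)) (hball k)

theorem F_add_inner_subgradF_le (k : ℕ) (y : EuclideanSpace ℝ (Fin n)) :
    S.F (S.x k) + ⟪S.subgradF k, y - S.x k⟫ ≤ S.F y := by
  have hf := S.hfconv.add_inner_le_of_hasGradientAt (S.hgrad (S.x k)) y
  have hg := S.hsub k y
  rw [subgradF, inner_add_left]
  unfold F
  linarith

theorem F_sub_le_norm_mul (k : ℕ) (z : EuclideanSpace ℝ (Fin n)) :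
    S.F (S.x k) - S.F z ≤ ‖S.subgradF k‖ * ‖S.x k - z‖ := by
  have h := S.F_add_inner_subgradF_le k z
  have hcs := real_inner_le_norm (S.subgradF k) (S.x k - z)
  rw [← neg_sub, inner_neg_right] at h
  linarith

theorem norm_x_succ_sub_sq_le (k : ℕ) (z : EuclideanSpace ℝ (Fin n)) :
    ‖S.x (k + 1) - z‖ ^ 2 ≤
      ‖S.x k - z‖ ^ 2 - 2 * S.α k * (S.F (S.x k) - S.F z) + S.α k ^ 2 * ‖S.subgradF k‖ ^ 2 := by
  set a := S.α k
  set d := S.dir k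
  set v := S.ξ k
  set w := S.ξ (k + 1)
  have hstep := S.x_sub_x_succ k
  have hexp :
      ‖S.x (k + 1) - z‖ ^ 2 = ‖S.x k - z‖ ^ 2 - 2 * a * ⟪d, S.x k - z⟫ + a ^ 2 * ‖d‖ ^ 2 := by
    rw [show S.x (k + 1) - z = (S.x k - z) - a • d by rw [← hstep]; abel, norm_sub_sq_real,
      inner_smul_right, real_inner_comm, norm_smul, mul_pow, Real.norm_eq_abs, sq_abs]
    ring
  have hf : S.f (S.x k) - S.f z ≤ ⟪S.f' (S.x k), S.x k - z⟫ := by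
    have := S.hfconv.add_inner_le_of_hasGradientAt (S.hgrad (S.x k)) z
    rw [← neg_sub, inner_neg_right] at this
    linarith
  have hg : S.g (S.x (k + 1)) - S.g z ≤ ⟪w, S.x (k + 1) - z⟫ := by
    have := S.hsub (k + 1) z
    rw [← neg_sub, inner_neg_right] at this
    linarith
  have hg' : S.g (S.x k) - S.g (S.x (k + 1)) ≤ a * ⟪v, d⟫ := by
    have := S.hsub k (S.x (k + 1))
    rw [← neg_sub, hstep, inner_neg_right, inner_smul_right] at this
    linarith
  have hw : ⟪w, S.x k - z⟫ = ⟪w, S.x (k + 1) - z⟫ + a * ⟪w, d⟫ := by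
    rw [← inner_smul_right, ← inner_add_right, ← hstep, sub_add_sub_cancel']
  have hinner : S.F (S.x k) - S.F z - a * (⟪v, d⟫ - ⟪w, d⟫) ≤ ⟪d, S.x k - z⟫ := by
    have hd : ⟪d, S.x k - z⟫ = ⟪S.f' (S.x k), S.x k - z⟫ + ⟪w, S.x k - z⟫ := inner_add_left _ _ _
    unfold F
    linarith
  have hnorm : ‖S.subgradF k‖ ^ 2 = ‖d‖ ^ 2 + 2 * (⟪v, d⟫ - ⟪w, d⟫) + ‖v - w‖ ^ 2 := by
    rw [show S.subgradF k = d + (v - w) by simp only [subgradF, d, dir]; abel, norm_add_sq_real,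
      inner_sub_right, real_inner_comm d v, real_inner_comm d w]
  rw [hexp, hnorm]
  -- what is left over is the slack `a ^ 2 * ‖v - w‖ ^ 2`
  nlinarith [mul_le_mul_of_nonneg_left hinner (S.alpha_pos k).le, sq_nonneg a, sq_nonneg ‖v - w‖]

theorem lam_mul_norm_sq (k : ℕ) :
    S.lam (k + 1) * ‖S.f' (S.x (k + 1)) - S.f' (S.x k)‖ ^ 2 =
      -(S.α k * ⟪S.f' (S.x (k + 1)) - S.f' (S.x k), S.dir k⟫) := by
  have hδ : ‖S.f' (S.x (k + 1)) - S.f' (S.x k)‖ ^ 2 ≠ 0 :=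
    pow_ne_zero 2 (norm_ne_zero_iff.2 (sub_ne_zero.2 (S.hne k)))
  rw [S.hlam k, div_mul_cancel₀ _ hδ, ← neg_sub (S.x k), S.x_sub_x_succ k, inner_neg_right,
    inner_smul_right]

theorem subgradF_succ (k : ℕ) :
    S.subgradF (k + 1) = S.dir k + (S.f' (S.x (k + 1)) - S.f' (S.x k)) := by
  simp only [subgradF, dir]
  abel

theorem norm_dir_le (k : ℕ) : ‖S.dir k‖ ≤ ‖S.subgradF k‖ := by
  -- monotonicity of the subdifferential of `g` along the step
  have hmono : ⟪S.dir k - S.subgradF k, S.dir k⟫ ≤ 0 := by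
    have h₁ := S.hsub k (S.x (k + 1))
    have h₂ := S.hsub (k + 1) (S.x k)
    rw [← neg_sub, S.x_sub_x_succ k, inner_neg_right, inner_smul_right] at h₁
    rw [S.x_sub_x_succ k, inner_smul_right] at h₂
    have : S.α k * ⟪S.ξ (k + 1) - S.ξ k, S.dir k⟫ ≤ 0 := by rw [inner_sub_left]; linarith
    rw [show S.dir k - S.subgradF k = S.ξ (k + 1) - S.ξ k by simp only [dir, subgradF]; abel]
    exact nonpos_of_mul_nonpos_right this (S.alpha_pos k)
  have hcs := real_inner_le_norm (S.subgradF k) (S.dir k)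
  rw [inner_sub_left, real_inner_self_eq_norm_sq] at hmono
  rcases (norm_nonneg (S.dir k)).eq_or_lt with h | h
  · rw [← h]
    exact norm_nonneg _
  · nlinarith

theorem alpha_mul_norm_sq_subgradF_succ_le (k : ℕ) (h : S.α k ≤ S.lam (k + 1)) :
    S.α k * ‖S.subgradF (k + 1)‖ ^ 2 ≤ S.F (S.x k) - S.F (S.x (k + 1)) := by
  have hbb := bb_mul_norm_add_sq_le_inner (S.lam_mul_norm_sq k) h
  rw [← S.subgradF_succ k] at hbb
  have hconv := S.F_add_inner_subgradF_le (k + 1) (S.x k)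
  rw [S.x_sub_x_succ k, inner_smul_right] at hconv
  linarith

theorem norm_sq_subgradF_succ_le (k : ℕ) (h : S.lam (k + 1) < S.α k) :
    ‖S.subgradF (k + 1)‖ ^ 2 ≤ S.B (k + 1) * ‖S.subgradF k‖ ^ 2 := by
  have hbb := S.lam_mul_norm_sq k
  have hdir : ‖S.dir k‖ ^ 2 ≤ ‖S.subgradF k‖ ^ 2 :=
    pow_le_pow_left₀ (norm_nonneg _) (S.norm_dir_le k) 2
  rw [S.subgradF_succ k]
  rcases lt_or_ge (S.α k / 2) (S.lam (k + 1)) with h₁ | h₁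
  · rw [S.B_succ_of_half_lt h₁ h, one_mul]
    exact (bb_norm_add_sq_le_of_half_lt hbb (S.alpha_pos k) h₁).trans hdir
  · rw [S.B_succ_of_le_half h₁]
    exact (bb_norm_add_sq_le_of_le_half hbb (S.alpha_pos k) (S.hlampos k) h₁).trans
      (mul_le_mul_of_nonneg_left hdir (by positivity))

noncomputable def descent (z : EuclideanSpace ℝ (Fin n)) (k : ℕ) : ℝ :=
  if S.α k ≤ S.lam (k + 1) then S.α k ^ 2 * ‖S.subgradF k‖ ^ 2
  else 2 * S.α k * (S.F (S.x k) - S.F z)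

theorem U_succ (z : EuclideanSpace ℝ (Fin n)) (k : ℕ) :
    S.U z (k + 1) = ‖S.x (k + 1) - z‖ ^ 2 + 2 * S.B (k + 1) * S.α (k + 1) ^ 2 * ‖S.subgradF k‖ ^ 2 +
      2 * S.E (k + 1) * S.α (k + 1) ^ 2 * (S.F (S.x k) - S.F z) :=
  rfl

theorem le_U_succ (z : EuclideanSpace ℝ (Fin n)) (k : ℕ) :
    ‖S.x (k + 1) - z‖ ^ 2 + 2 * S.α (k + 1) ^ 2 * ‖S.subgradF (k + 1)‖ ^ 2 +
      2 * S.θ (k + 1) * S.α (k + 1) * (S.F (S.x (k + 1)) - S.F z) ≤ S.U z (k + 1) := by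
  have hα := S.alpha_pos k
  rw [U_succ]
  rcases le_or_gt (S.α k) (S.lam (k + 1)) with h | h
  · have hdec := S.alpha_mul_norm_sq_subgradF_succ_le k h
    rw [S.B_succ_of_le h, S.E_succ_of_le h, (S.hcase1 k h).2]
    have hmain : 2 * S.α (k + 1) ^ 2 * ‖S.subgradF (k + 1)‖ ^ 2 ≤
        2 * S.α (k + 1) ^ 2 / S.α k * (S.F (S.x k) - S.F (S.x (k + 1))) := by
      rw [div_mul_eq_mul_div, le_div_iff₀ hα]
      nlinarith [mul_le_mul_of_nonneg_left hdec (by positivity : 0 ≤ 2 * S.α (k + 1) ^ 2)]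
    linear_combination hmain
  · have hB := S.norm_sq_subgradF_succ_le k h
    rw [S.E_succ_of_lt h, S.theta_succ_of_lt h]
    nlinarith [mul_le_mul_of_nonneg_left hB (by positivity : 0 ≤ 2 * S.α (k + 1) ^ 2)]

theorem two_mul_B_succ_mul_alpha_succ_sq_le (k : ℕ) :
    2 * S.B (k + 1) * S.α (k + 1) ^ 2 ≤ S.α k ^ 2 := by
  rcases le_or_gt (S.α k) (S.lam (k + 1)) with h | h
  · rw [S.B_succ_of_le h, mul_zero, zero_mul]
    positivity
  rcases lt_or_ge (S.α k / 2) (S.lam (k + 1)) with h₁ | h₁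
  · rw [S.B_succ_of_half_lt h₁ h, S.alpha_succ_sq_of_half_lt h₁ h]
    linarith
  · rw [S.B_succ_of_le_half h₁, S.alpha_succ_sq_of_le_half h₁]
    have := S.hlampos k
    field_simp
    nlinarith

section Minimizer

variable {S} {z : EuclideanSpace ℝ (Fin n)} (hz : ∀ y, S.F z ≤ S.F y)
include hz

theorem U_succ_add_descent_le (k : ℕ) :
    S.U z (k + 1) + S.descent z k ≤
      ‖S.x k - z‖ ^ 2 + 2 * S.α k ^ 2 * ‖S.subgradF k‖ ^ 2 +
        2 * S.θ k * S.α k * (S.F (S.x k) - S.F z) := by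
  have hstep := S.norm_x_succ_sub_sq_le k z
  have hα := S.alpha_pos k
  have he : 0 ≤ S.F (S.x k) - S.F z := sub_nonneg.2 (hz _)
  have hθe : 0 ≤ 2 * S.θ k * S.α k * (S.F (S.x k) - S.F z) := by
    have := S.theta_nonneg k
    positivity
  have hp : 0 ≤ ‖S.subgradF k‖ ^ 2 := by positivity
  rw [U_succ, descent]
  rcases le_or_gt (S.α k) (S.lam (k + 1)) with h | h
  · rw [if_pos h, S.B_succ_of_le h, S.E_succ_of_le h, S.alpha_succ_sq_of_le h]
    have : 2 * (1 / S.α k) * ((1 + S.θ k) * S.α k ^ 2) = 2 * (1 + S.θ k) * S.α k := by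
      field_simp
    rw [this]
    nlinarith
  rw [if_neg h.not_ge, S.E_succ_of_lt h]
  rcases lt_or_ge (S.α k / 2) (S.lam (k + 1)) with h₁ | h₁
  · rw [S.B_succ_of_half_lt h₁ h, S.alpha_succ_sq_of_half_lt h₁ h]
    nlinarith
  · rw [S.B_succ_of_le_half h₁, S.alpha_succ_sq_of_le_half h₁]
    have hl := S.hlampos k
    have : 2 * ((S.α k - S.lam (k + 1)) ^ 2 / S.lam (k + 1) ^ 2) * (S.lam (k + 1) ^ 2 / 2) ≤
        S.α k ^ 2 := by
      field_simp
      nlinarith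
    nlinarith [mul_le_mul_of_nonneg_right this hp]

theorem U_succ_succ_add_descent_le (k : ℕ) :
    S.U z (k + 2) + S.descent z (k + 1) ≤ S.U z (k + 1) :=
  (U_succ_add_descent_le hz (k + 1)).trans (S.le_U_succ z k)

theorem descent_nonneg (k : ℕ) : 0 ≤ S.descent z k := by
  have := S.alpha_pos k
  have := sub_nonneg.2 (hz (S.x k))
  unfold descent
  split_ifs <;> positivity

theorem U_antitone : Antitone fun k ↦ S.U z (k + 1) :=
  antitone_nat_of_succ_le fun k ↦
    le_of_add_le_of_nonneg_left (U_succ_succ_add_descent_le hz k) (descent_nonneg hz (k + 1))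

theorem norm_x_succ_sub_sq_le_U (k : ℕ) : ‖S.x (k + 1) - z‖ ^ 2 ≤ S.U z (k + 1) := by
  have hB : 0 ≤ S.B (k + 1) := by
    unfold B
    split_ifs <;> positivity
  have hE : 0 ≤ S.E (k + 1) := by
    have := S.alpha_pos k
    simp only [E, Eaux, Nat.add_one_ne_zero, if_false, Nat.add_sub_cancel]
    split_ifs <;> positivity
  have := sub_nonneg.2 (hz (S.x k))
  rw [U_succ]
  have : 0 ≤ 2 * S.B (k + 1) * S.α (k + 1) ^ 2 * ‖S.subgradF k‖ ^ 2 := by positivity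
  have : 0 ≤ 2 * S.E (k + 1) * S.α (k + 1) ^ 2 * (S.F (S.x k) - S.F z) := by positivity
  linarith

theorem exists_tendsto_U : ∃ c, Tendsto (fun k ↦ S.U z (k + 1)) atTop (nhds c) :=
  ⟨_, tendsto_atTop_ciInf (U_antitone hz)
    ⟨0, by rintro _ ⟨k, rfl⟩; exact (sq_nonneg _).trans (norm_x_succ_sub_sq_le_U hz k)⟩⟩

theorem tendsto_descent : Tendsto (fun k ↦ S.descent z (k + 1)) atTop (nhds 0) := by
  obtain ⟨c, hc⟩ := exists_tendsto_U hz
  have hdiff : Tendsto (fun k ↦ S.U z (k + 1) - S.U z (k + 2)) atTop (nhds 0) := by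
    simpa using hc.sub (hc.comp (tendsto_add_atTop_nat 1))
  refine squeeze_zero (fun k ↦ descent_nonneg hz (k + 1)) (fun k ↦ ?_) hdiff
  linarith [U_succ_succ_add_descent_le hz k]

theorem U_one_le :
    S.U z 1 ≤ ‖S.x 0 - z‖ ^ 2 + 2 * S.α 0 ^ 2 * ‖S.subgradF 0‖ ^ 2 +
      max (2 * (S.E 1 * S.α 1 ^ 2 - S.α 0)) 0 * (S.F (S.x 0) - S.F z) := by
  have hstep := S.norm_x_succ_sub_sq_le 0 z
  have he := sub_nonneg.2 (hz (S.x 0))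
  have hB := mul_le_mul_of_nonneg_right (S.two_mul_B_succ_mul_alpha_succ_sq_le 0)
    (sq_nonneg ‖S.subgradF 0‖)
  have hmax := mul_le_mul_of_nonneg_right (le_max_left (2 * (S.E 1 * S.α 1 ^ 2 - S.α 0)) 0) he
  rw [U_succ]
  linarith

theorem sq_alpha_mul_F_sub_le {T : ℝ} {k : ℕ} (hk : ‖S.x k - z‖ ≤ T) :
    (S.α k * (S.F (S.x k) - S.F z)) ^ 2 ≤ S.descent z k ^ 2 / 4 + T ^ 2 * S.descent z k := by
  have hα := S.alpha_pos k
  have he := sub_nonneg.2 (hz (S.x k))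
  unfold descent
  split_ifs with h
  · have hle : S.α k * (S.F (S.x k) - S.F z) ≤ T * (S.α k * ‖S.subgradF k‖) := by
      have := (S.F_sub_le_norm_mul k z).trans (mul_le_mul_of_nonneg_left hk (norm_nonneg _))
      nlinarith
    have := pow_le_pow_left₀ (by positivity) hle 2
    nlinarith [sq_nonneg (S.α k ^ 2 * ‖S.subgradF k‖ ^ 2)]
  · have : 0 ≤ T ^ 2 * (2 * S.α k * (S.F (S.x k) - S.F z)) := by positivity
    have : (2 * S.α k * (S.F (S.x k) - S.F z)) ^ 2 / 4 = (S.α k * (S.F (S.x k) - S.F z)) ^ 2 := by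
      ring
    linarith

theorem tendsto_F {T : ℝ} (hball : ∀ k, ‖S.x k - z‖ ≤ T) {μ : ℝ} (hμ : 0 < μ)
    (hαμ : ∀ k, μ ≤ S.α k) : Tendsto (fun k ↦ S.F (S.x k)) atTop (nhds (S.F z)) := by
  set b : ℕ → ℝ := fun k ↦ S.descent z (k + 1) ^ 2 / 4 + T ^ 2 * S.descent z (k + 1)
  have hb : Tendsto (fun k ↦ √(b k) / μ) atTop (nhds 0) := by
    have := ((tendsto_descent hz).pow 2).div_const 4 |>.add ((tendsto_descent hz).const_mul (T ^ 2))
    simpa using (this.sqrt).div_const μ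
  have hle (k : ℕ) : S.F (S.x (k + 1)) - S.F z ≤ √(b k) / μ := by
    rw [le_div_iff₀ hμ, mul_comm]
    apply Real.le_sqrt_of_sq_le
    refine le_trans ?_ (sq_alpha_mul_F_sub_le hz (hball (k + 1)))
    have := sub_nonneg.2 (hz (S.x (k + 1)))
    exact pow_le_pow_left₀ (by positivity) (mul_le_mul_of_nonneg_right (hαμ _) this) 2
  have := squeeze_zero (fun k ↦ sub_nonneg.2 (hz (S.x (k + 1)))) hle hb
  rw [← tendsto_add_atTop_iff_nat 1]
  simpa using this.add_const (S.F z)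

theorem exists_tendsto_dist_sq_sub {w : EuclideanSpace ℝ (Fin n)} (hw : ∀ y, S.F w ≤ S.F y) :
    ∃ c, Tendsto (fun k ↦ dist (S.x k) z ^ 2 - dist (S.x k) w ^ 2) atTop (nhds c) := by
  obtain ⟨cz, hcz⟩ := exists_tendsto_U hz
  obtain ⟨cw, hcw⟩ := exists_tendsto_U hw
  have hF : S.F z = S.F w := (hz w).antisymm (hw z)
  refine ⟨cz - cw, (tendsto_add_atTop_iff_nat 1).1 ((hcz.sub hcw).congr fun k ↦ ?_)⟩
  simp only [U_succ, hF, dist_eq_norm]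
  ring

end Minimizer

theorem norm_x_sub_le {xs : EuclideanSpace ℝ (Fin n)} (hxs : ∀ y, S.F xs ≤ S.F y) {T : ℝ}
    (hT0 : 0 ≤ T)
    (hT2 : T ^ 2 = ‖S.x 0 - xs‖ ^ 2 + 2 * S.α 0 ^ 2 * ‖S.subgradF 0‖ ^ 2 +
      max (2 * (S.E 1 * S.α 1 ^ 2 - S.α 0)) 0 * (S.F (S.x 0) - S.F xs)) (k : ℕ) :
    ‖S.x k - xs‖ ≤ T := by
  refine (pow_le_pow_iff_left₀ (norm_nonneg _) hT0 two_ne_zero).1 ?_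
  rw [hT2]
  cases k with
  | zero =>
    have := mul_nonneg (le_max_right (2 * (S.E 1 * S.α 1 ^ 2 - S.α 0)) 0)
      (sub_nonneg.2 (hxs (S.x 0)))
    have : 0 ≤ 2 * S.α 0 ^ 2 * ‖S.subgradF 0‖ ^ 2 := by positivity
    linarith
  | succ k =>
    exact (norm_x_succ_sub_sq_le_U hxs k).trans
      ((U_antitone hxs (Nat.zero_le k)).trans (U_one_le hxs))

theorem continuous_F : Continuous S.F :=
  (continuous_iff_continuousAt.2 fun y ↦ (S.hgrad y).hasFDerivAt.continuousAt).add
    S.hgconv.locallyLipschitz.continuous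

end AdaPBB

open scoped RealInnerProductSpace in
theorem adapbb_pointwise_convergence_general (n : ℕ) (S : AdaPBB n)
    (xs : EuclideanSpace ℝ (Fin n)) (hxs : ∀ y, S.F xs ≤ S.F y)
    (T : ℝ) (hT0 : 0 ≤ T)
    (hT2 : T ^ 2 = ‖S.x 0 - xs‖ ^ 2 + 2 * S.α 0 ^ 2 * ‖S.f' (S.x 0) + S.ξ 0‖ ^ 2 +
      max (2 * (S.E 1 * S.α 1 ^ 2 - S.α 0)) 0 * (S.F (S.x 0) - S.F xs))
    (L : ℝ) (hL : 0 < L)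
    (hcoco : ∀ x y : EuclideanSpace ℝ (Fin n), ‖x - xs‖ ≤ T → ‖y - xs‖ ≤ T →
      (1 / L) * ‖S.f' x - S.f' y‖ ^ 2 ≤ ⟪S.f' x - S.f' y, x - y⟫) :
    ∃ z, (∀ y, S.F z ≤ S.F y) ∧ Filter.Tendsto S.x Filter.atTop (nhds z) := by
  have hball := S.norm_x_sub_le hxs hT0 hT2
  have hμ : 0 < min (S.α 0) (1 / L / √2) := lt_min S.hα0 (by positivity)
  have hF := AdaPBB.tendsto_F hxs hball hμ (S.min_le_alpha (S.inv_le_lam hcoco hball))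
  exact exists_tendsto_of_tendsto_dist_sq_sub (C := {z | ∀ y, S.F z ≤ S.F y})
    (isCompact_closedBall xs T) (fun k ↦ mem_closedBall_iff_norm.2 (hball k))
    (fun z hz y ↦ hz.eq_of_tendsto_comp S.continuous_F.continuousAt hF ▸ hxs y)
    (fun z hz w hw ↦ AdaPBB.exists_tendsto_dist_sq_sub hz hw)

open scoped RealInnerProductSpace in
/-- Theorem 5.14 (pointwise convergence of AdaPBB): the sequence `{x^k}` generated by the
AdaPBB iteration converges to a minimizer of `F = f + g`. -/
theorem adapbb_pointwise_convergence (n : ℕ) (S : AdaPBB n)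
    (xs : EuclideanSpace ℝ (Fin n)) (hxs : ∀ y, S.F xs ≤ S.F y)
    (T : ℝ) (hT0 : 0 ≤ T)
    (hT2 : T ^ 2 = ‖S.x 0 - xs‖ ^ 2 + 2 * S.α 0 ^ 2 * ‖S.f' (S.x 0) + S.ξ 0‖ ^ 2 +
      max (2 * (S.E 1 * S.α 1 ^ 2 - S.α 0)) 0 * (S.F (S.x 0) - S.F xs))
    (L : ℝ) (hL : 0 < L)
    (hsmooth : ∀ x y : EuclideanSpace ℝ (Fin n), ‖x - xs‖ ≤ T → ‖y - xs‖ ≤ T →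
      (1 / (2 * L)) * ‖S.f' x - S.f' y‖ ^ 2 ≤ S.f x - S.f y - ⟪S.f' y, x - y⟫)
    (hcoco : ∀ x y : EuclideanSpace ℝ (Fin n), ‖x - xs‖ ≤ T → ‖y - xs‖ ≤ T →
      (1 / L) * ‖S.f' x - S.f' y‖ ^ 2 ≤ ⟪S.f' x - S.f' y, x - y⟫) :
    ∃ z, (∀ y, S.F z ≤ S.F y) ∧ Filter.Tendsto S.x Filter.atTop (nhds z) :=
  adapbb_pointwise_convergence_general n S xs hxs T hT0 hT2 L hL hcoco
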